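/- In the two-player interconnected contest with Tullock contest success function with parameter γ ∈ (0,1], the set of Nash equilibria is interchangeable: if (e_1', e_2') and (e_1'', e_2'') are Nash equilibria, then (e_1', e_2'') and (e_1'', e_2') are also Nash equilibria. -/

import Mathlib

/-!
Away from the battlefields where both players exert no effective effort, the winning
probabilities add up to one, so the sum of the two payoffs is the total value minus both costs
minus the value of those idle battlefields. A best reply also beats any deviation by the idle
value of the deviation, since a tiny extra effort there wins them outright. Adding the four
such bounds between two equilibria `P`, `Q` and the mixed profiles `(P₀, Q₁)`, `(Q₀, P₁)`, the
costs cancel and all idle values are forced to vanish; hence every mixed payoff equals the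
corresponding equilibrium payoff, and each player's best-reply property transfers.
-/

open Finset Matrix

/-- Effective effort of a player with spillover matrix `ρ` and effort vector `e`
at battlefield `k`: `y^k = e^k + ∑_{l ≠ k} ρ^{l,k} e^l`. -/
noncomputable def effY {m : ℕ} (ρ : Matrix (Fin m) (Fin m) ℝ) (e : Fin m → ℝ)
    (k : Fin m) : ℝ :=
  e k + ∑ l ∈ Finset.univ.erase k, ρ l k * e l

/-- Tullock contest success function with parameter `γ`.  When both effective
efforts are `0` this gives `0/0 = 0`, matching the convention. -/
noncomputable def tullock (γ y₁ y₂ : ℝ) : ℝ :=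
  y₁ ^ γ / (y₁ ^ γ + y₂ ^ γ)

/-- Payoff of player `i` in the interconnected contest. -/
noncomputable def payoff {m : ℕ} (γ : ℝ) (v : Fin m → ℝ) (c : Fin 2 → ℝ)
    (ρ : Fin 2 → Matrix (Fin m) (Fin m) ℝ) (e : Fin 2 → Fin m → ℝ) (i : Fin 2) : ℝ :=
  (∑ k, v k * tullock γ (effY (ρ i) (e i) k) (effY (ρ (1 - i)) (e (1 - i)) k))
    - c i * ∑ k, e i k

/-- Pure strategy Nash equilibrium of the interconnected contest:
nonnegative efforts, and no profitable deviation to any nonnegative effort vector. -/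
def IsNashEq {m : ℕ} (γ : ℝ) (v : Fin m → ℝ) (c : Fin 2 → ℝ)
    (ρ : Fin 2 → Matrix (Fin m) (Fin m) ℝ) (e : Fin 2 → Fin m → ℝ) : Prop :=
  (∀ i k, 0 ≤ e i k) ∧
  ∀ (i : Fin 2) (e' : Fin m → ℝ), (∀ k, 0 ≤ e' k) →
    payoff γ v c ρ (Function.update e i e') i ≤ payoff γ v c ρ e i

/-- Winning probability of player `i` at battlefield `k` under profile `e`. -/
noncomputable def eqProb {m : ℕ} (γ : ℝ) (ρ : Fin 2 → Matrix (Fin m) (Fin m) ℝ)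
    (e : Fin 2 → Fin m → ℝ) (i : Fin 2) (k : Fin m) : ℝ :=
  tullock γ (effY (ρ i) (e i) k) (effY (ρ (1 - i)) (e (1 - i)) k)

lemma div_add_le_div_add {a a' b : ℝ} (ha : 0 ≤ a) (haa' : a ≤ a') (hb : 0 ≤ b) :
    a / (a + b) ≤ a' / (a' + b) := by
  rcases ha.eq_or_lt with rfl | ha
  · simp only [zero_div]; positivity
  rw [div_le_div_iff₀ (by positivity) (by linarith)]
  nlinarith

section Tullock

variable {γ : ℝ}

lemma tullock_zero_zero (hγ : γ ≠ 0) : tullock γ 0 0 = 0 := by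
  simp [tullock, Real.zero_rpow hγ]

lemma tullock_zero_right (hγ : γ ≠ 0) {y : ℝ} (hy : 0 < y) : tullock γ y 0 = 1 := by
  simp [tullock, Real.zero_rpow hγ, (Real.rpow_pos_of_pos hy γ).ne']

lemma tullock_mono_left (hγ : 0 ≤ γ) {y y' z : ℝ} (hy : 0 ≤ y) (hyy' : y ≤ y') (hz : 0 ≤ z) :
    tullock γ y z ≤ tullock γ y' z :=
  div_add_le_div_add (Real.rpow_nonneg hy γ) (Real.rpow_le_rpow hy hyy' hγ)
    (Real.rpow_nonneg hz γ)

lemma tullock_add_tullock_add_ite (hγ : γ ≠ 0) {y z : ℝ} (hy : 0 ≤ y) (hz : 0 ≤ z) :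
    tullock γ y z + tullock γ z y + (if y = 0 ∧ z = 0 then 1 else 0) = 1 := by
  split_ifs with h
  · rw [h.1, h.2, tullock_zero_zero hγ]; norm_num
  have hpos : 0 < y ^ γ + z ^ γ := by
    rcases not_and_or.mp h with h | h
    · linarith [Real.rpow_pos_of_pos (hy.lt_of_ne' h) γ, Real.rpow_nonneg hz γ]
    · linarith [Real.rpow_pos_of_pos (hz.lt_of_ne' h) γ, Real.rpow_nonneg hy γ]
  rw [tullock, tullock, add_comm (z ^ γ), ← add_div, div_self hpos.ne', add_zero]

end Tullock

section Prize

variable {ι : Type*} [Fintype ι] (γ : ℝ) (v : ι → ℝ)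

noncomputable def prize (y z : ι → ℝ) : ℝ :=
  ∑ k, v k * tullock γ (y k) (z k)

open Classical in
noncomputable def idleSet (y z : ι → ℝ) : Finset ι :=
  univ.filter fun k => y k = 0 ∧ z k = 0

variable {γ v}

lemma mem_idleSet {y z : ι → ℝ} {k : ι} : k ∈ idleSet y z ↔ y k = 0 ∧ z k = 0 := by
  simp [idleSet]

lemma idleSet_comm (y z : ι → ℝ) : idleSet y z = idleSet z y := by
  ext k; simp only [mem_idleSet, and_comm]

lemma prize_add_prize_add_sum_idleSet (hγ : γ ≠ 0) {y z : ι → ℝ} (hy : ∀ k, 0 ≤ y k)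
    (hz : ∀ k, 0 ≤ z k) :
    prize γ v y z + prize γ v z y + ∑ k ∈ idleSet y z, v k = ∑ k, v k := by
  classical
  simp only [prize, idleSet, Finset.sum_filter, ← Finset.sum_add_distrib]
  refine Finset.sum_congr rfl fun k _ => ?_
  have h := congrArg (v k * ·) (tullock_add_tullock_add_ite hγ (hy k) (hz k))
  simp only [mul_add, mul_ite, mul_one, mul_zero] at h
  convert h

lemma prize_add_sum_idleSet_le (hγ : 0 < γ) (hv : ∀ k, 0 ≤ v k) {y y' z : ι → ℝ}
    (hy : ∀ k, 0 ≤ y k) (hyy' : ∀ k, y k ≤ y' k) (hz : ∀ k, 0 ≤ z k)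
    (hidle : ∀ k ∈ idleSet y z, 0 < y' k) :
    prize γ v y z + ∑ k ∈ idleSet y z, v k ≤ prize γ v y' z := by
  classical
  simp only [prize, idleSet, Finset.sum_filter, ← Finset.sum_add_distrib]
  refine Finset.sum_le_sum fun k _ => ?_
  split_ifs with h
  · have hy'k := hidle k (mem_idleSet.2 h)
    rw [h.1, h.2, tullock_zero_zero hγ.ne', tullock_zero_right hγ.ne' hy'k]
    simp
  · rw [add_zero]
    exact mul_le_mul_of_nonneg_left (tullock_mono_left hγ.le (hy k) (hyy' k) (hz k)) (hv k)

end Prize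

section EffectiveEffort

variable {m : ℕ} {ρ : Matrix (Fin m) (Fin m) ℝ}

lemma le_effY (hρ : ∀ k l, 0 ≤ ρ k l) {e : Fin m → ℝ} (he : ∀ k, 0 ≤ e k) (k : Fin m) :
    e k ≤ effY ρ e k :=
  le_add_of_nonneg_right (Finset.sum_nonneg fun l _ => mul_nonneg (hρ l k) (he l))

lemma effY_nonneg (hρ : ∀ k l, 0 ≤ ρ k l) {e : Fin m → ℝ} (he : ∀ k, 0 ≤ e k) (k : Fin m) :
    0 ≤ effY ρ e k :=
  (he k).trans (le_effY hρ he k)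

lemma effY_mono (hρ : ∀ k l, 0 ≤ ρ k l) {e e' : Fin m → ℝ} (h : ∀ k, e k ≤ e' k)
    (k : Fin m) : effY ρ e k ≤ effY ρ e' k :=
  add_le_add (h k) (Finset.sum_le_sum fun l _ => mul_le_mul_of_nonneg_left (h l) (hρ l k))

variable {γ : ℝ} {v : Fin m → ℝ}

open Filter Topology in
lemma prize_sub_cost_add_sum_idleSet_le (hγ : 0 < γ) (hv : ∀ k, 0 ≤ v k)
    (hρ : ∀ k l, 0 ≤ ρ k l) {z : Fin m → ℝ} (hz : ∀ k, 0 ≤ z k) {c A : ℝ}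
    (hA : ∀ g : Fin m → ℝ, (∀ k, 0 ≤ g k) → prize γ v (effY ρ g) z - c * ∑ k, g k ≤ A)
    {f : Fin m → ℝ} (hf : ∀ k, 0 ≤ f k) :
    prize γ v (effY ρ f) z - c * ∑ k, f k + ∑ k ∈ idleSet (effY ρ f) z, v k ≤ A := by
  classical
  set I := idleSet (effY ρ f) z
  have hfill : ∀ t > 0,
      prize γ v (effY ρ f) z - c * ∑ k, f k + ∑ k ∈ I, v k ≤ A + c * #I * t := by
    intro t ht
    set g : Fin m → ℝ := fun k => f k + if k ∈ I then t else 0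
    have hfg : ∀ k, f k ≤ g k := fun k =>
      le_add_of_nonneg_right (by split_ifs <;> positivity)
    have hg : ∀ k, 0 ≤ g k := fun k => (hf k).trans (hfg k)
    have hgI : ∀ k ∈ I, 0 < effY ρ g k := fun k hk =>
      (show 0 < g k by simp only [g, hk, if_true]; linarith [hf k]).trans_le (le_effY hρ hg k)
    have hprize : prize γ v (effY ρ f) z + ∑ k ∈ I, v k ≤ prize γ v (effY ρ g) z :=
      prize_add_sum_idleSet_le hγ hv (effY_nonneg hρ hf) (effY_mono hρ hfg) hz hgI
    have hcost : ∑ k, g k = ∑ k, f k + #I * t := by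
      simp [g, Finset.sum_add_distrib]
    have hbr := hA g hg
    rw [hcost] at hbr
    linarith
  have hlim : Tendsto (fun t => A + c * #I * t) (𝓝[>] 0) (𝓝 A) :=
    tendsto_nhdsWithin_of_tendsto_nhds
      ((continuous_const.add (continuous_const.mul continuous_id)).tendsto' 0 A (by simp))
  exact ge_of_tendsto hlim (eventually_nhdsWithin_of_forall hfill)

end EffectiveEffort

lemma update_zero_fin_two {α : Type*} (e : Fin 2 → α) (x : α) :
    Function.update e 0 x = ![x, e 1] := by
  ext j; fin_cases j <;> rfl

lemma update_one_fin_two {α : Type*} (e : Fin 2 → α) (x : α) :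
    Function.update e 1 x = ![e 0, x] := by
  ext j; fin_cases j <;> rfl

section Contest

variable {m : ℕ} {γ : ℝ} {v : Fin m → ℝ} {c : Fin 2 → ℝ}
  {ρ : Fin 2 → Matrix (Fin m) (Fin m) ℝ}

lemma payoff_zero (e : Fin 2 → Fin m → ℝ) :
    payoff γ v c ρ e 0 = prize γ v (effY (ρ 0) (e 0)) (effY (ρ 1) (e 1)) - c 0 * ∑ k, e 0 k :=
  rfl

lemma payoff_one (e : Fin 2 → Fin m → ℝ) :
    payoff γ v c ρ e 1 = prize γ v (effY (ρ 1) (e 1)) (effY (ρ 0) (e 0)) - c 1 * ∑ k, e 1 k :=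
  rfl

variable (v ρ) in
noncomputable def idleValue (e : Fin 2 → Fin m → ℝ) : ℝ :=
  ∑ k ∈ idleSet (effY (ρ 0) (e 0)) (effY (ρ 1) (e 1)), v k

lemma idleValue_nonneg (hv : ∀ k, 0 ≤ v k) (e : Fin 2 → Fin m → ℝ) : 0 ≤ idleValue v ρ e :=
  Finset.sum_nonneg fun k _ => hv k

lemma payoff_add_payoff_add_idleValue (hγ : γ ≠ 0) (hρ : ∀ i k l, 0 ≤ ρ i k l)
    {e : Fin 2 → Fin m → ℝ} (he : ∀ i k, 0 ≤ e i k) :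
    payoff γ v c ρ e 0 + payoff γ v c ρ e 1 + idleValue v ρ e
      = ∑ k, v k - c 0 * ∑ k, e 0 k - c 1 * ∑ k, e 1 k := by
  have h := prize_add_prize_add_sum_idleSet (v := v) hγ (effY_nonneg (hρ 0) (he 0))
    (effY_nonneg (hρ 1) (he 1))
  rw [payoff_zero, payoff_one, idleValue]
  linarith

lemma nonneg_vec_fin_two {x y : Fin m → ℝ} (hx : ∀ k, 0 ≤ x k) (hy : ∀ k, 0 ≤ y k) :
    ∀ i k, 0 ≤ (![x, y] : Fin 2 → Fin m → ℝ) i k := by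
  intro i k; fin_cases i
  exacts [hx k, hy k]

variable (hγ : 0 < γ) (hv : ∀ k, 0 ≤ v k) (hρ : ∀ i k l, 0 ≤ ρ i k l)
include hγ hv hρ

lemma IsNashEq.payoff_add_idleValue_le_zero {e : Fin 2 → Fin m → ℝ}
    (h : IsNashEq γ v c ρ e) {x : Fin m → ℝ} (hx : ∀ k, 0 ≤ x k) :
    payoff γ v c ρ ![x, e 1] 0 + idleValue v ρ ![x, e 1] ≤ payoff γ v c ρ e 0 :=
  prize_sub_cost_add_sum_idleSet_le hγ hv (hρ 0) (effY_nonneg (hρ 1) (h.1 1))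
    (fun g hg => (update_zero_fin_two e g ▸ h.2 0 g hg : payoff γ v c ρ ![g, e 1] 0 ≤ _)) hx

lemma IsNashEq.payoff_add_idleValue_le_one {e : Fin 2 → Fin m → ℝ}
    (h : IsNashEq γ v c ρ e) {y : Fin m → ℝ} (hy : ∀ k, 0 ≤ y k) :
    payoff γ v c ρ ![e 0, y] 1 + idleValue v ρ ![e 0, y] ≤ payoff γ v c ρ e 1 := by
  rw [idleValue, idleSet_comm]
  exact prize_sub_cost_add_sum_idleSet_le hγ hv (hρ 1) (effY_nonneg (hρ 0) (h.1 0))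
    (fun g hg => (update_one_fin_two e g ▸ h.2 1 g hg : payoff γ v c ρ ![e 0, g] 1 ≤ _)) hy

lemma IsNashEq.payoff_interchange {P Q : Fin 2 → Fin m → ℝ} (hP : IsNashEq γ v c ρ P)
    (hQ : IsNashEq γ v c ρ Q) :
    payoff γ v c ρ ![P 0, Q 1] 0 = payoff γ v c ρ Q 0 ∧
      payoff γ v c ρ ![P 0, Q 1] 1 = payoff γ v c ρ P 1 := by
  have hsumM₁ := payoff_add_payoff_add_idleValue (v := v) (c := c) hγ.ne' hρ
    (nonneg_vec_fin_two (hP.1 0) (hQ.1 1))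
  have hsumM₂ := payoff_add_payoff_add_idleValue (v := v) (c := c) hγ.ne' hρ
    (nonneg_vec_fin_two (hQ.1 0) (hP.1 1))
  simp only [Matrix.cons_val_zero, Matrix.cons_val_one, Matrix.cons_val_fin_one] at hsumM₁ hsumM₂
  have hsumP := payoff_add_payoff_add_idleValue (v := v) (c := c) hγ.ne' hρ hP.1
  have hsumQ := payoff_add_payoff_add_idleValue (v := v) (c := c) hγ.ne' hρ hQ.1
  have hdevP₁ := hP.payoff_add_idleValue_le_one hγ hv hρ (hQ.1 1)
  have hdevQ₀ := hQ.payoff_add_idleValue_le_zero hγ hv hρ (hP.1 0)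
  have hdevQ₁ := hQ.payoff_add_idleValue_le_one hγ hv hρ (hP.1 1)
  have hdevP₀ := hP.payoff_add_idleValue_le_zero hγ hv hρ (hQ.1 0)
  have hidle := fun e => idleValue_nonneg (ρ := ρ) hv e
  constructor <;> linarith [hidle P, hidle Q, hidle ![P 0, Q 1], hidle ![Q 0, P 1]]

lemma IsNashEq.interchange {P Q : Fin 2 → Fin m → ℝ} (hP : IsNashEq γ v c ρ P)
    (hQ : IsNashEq γ v c ρ Q) : IsNashEq γ v c ρ ![P 0, Q 1] := by
  obtain ⟨h₀, h₁⟩ := hP.payoff_interchange hγ hv hρ hQ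
  refine ⟨nonneg_vec_fin_two (hP.1 0) (hQ.1 1),
    Fin.forall_fin_two.2 ⟨fun f hf => ?_, fun f hf => ?_⟩⟩
  · rw [update_zero_fin_two, h₀]
    exact update_zero_fin_two Q f ▸ hQ.2 0 f hf
  · rw [update_one_fin_two, h₁]
    exact update_one_fin_two P f ▸ hP.2 1 f hf

end Contest

theorem nash_equilibria_interchangeable_general (m : ℕ) (γ : ℝ) (hγ0 : 0 < γ)
    (v : Fin m → ℝ) (hv : ∀ k, 0 < v k)
    (c : Fin 2 → ℝ)
    (ρ : Fin 2 → Matrix (Fin m) (Fin m) ℝ)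
    (hρ : ∀ i k l, 0 ≤ ρ i k l)
    (e' e'' : Fin 2 → Fin m → ℝ)
    (h' : IsNashEq γ v c ρ e') (h'' : IsNashEq γ v c ρ e'') :
    IsNashEq γ v c ρ ![e' 0, e'' 1] ∧ IsNashEq γ v c ρ ![e'' 0, e' 1] :=
  have hv' : ∀ k, 0 ≤ v k := fun k => (hv k).le
  ⟨h'.interchange hγ0 hv' hρ h'', h''.interchange hγ0 hv' hρ h'⟩

/-- the set of Nash equilibria is interchangeable. -/
theorem nash_equilibria_interchangeable (m : ℕ) (γ : ℝ) (hγ0 : 0 < γ) (hγ1 : γ ≤ 1)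
    (v : Fin m → ℝ) (hv : ∀ k, 0 < v k)
    (c : Fin 2 → ℝ) (hc : ∀ i, 0 < c i)
    (ρ : Fin 2 → Matrix (Fin m) (Fin m) ℝ)
    (hρ : ∀ i k l, 0 ≤ ρ i k l) (hρd : ∀ i k, ρ i k k = 0)
    (e' e'' : Fin 2 → Fin m → ℝ)
    (h' : IsNashEq γ v c ρ e') (h'' : IsNashEq γ v c ρ e'') :
    IsNashEq γ v c ρ ![e' 0, e'' 1] ∧ IsNashEq γ v c ρ ![e'' 0, e' 1] :=
  nash_equilibria_interchangeable_general m γ hγ0 v hv c ρ hρ e' e'' h' h''
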